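/- Two radially closed star sets A₁, A₂ ⊆ ℝ^d are equal if and only if d_r(x,A₁) = d_r(x,A₂) for all x ∈ ℝ^d. In particular, the map sending a star body to its radial distance functional is injective. -/
import Mathlib


open scoped ENNReal

noncomputable section

/-- Radial function of a set `A ⊆ ℝ^d` in direction `θ`. -/
def radialFn {d : ℕ} (A : Set (EuclideanSpace ℝ (Fin d)))
    (θ : EuclideanSpace ℝ (Fin d)) : ℝ≥0∞ :=
  sSup (ENNReal.ofReal '' {r : ℝ | 0 ≤ r ∧ r • θ ∈ A})

/-- A star set: nonempty and closed under scaling by `t ∈ [0,1]`. -/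
def IsStarSet {d : ℕ} (A : Set (EuclideanSpace ℝ (Fin d))) : Prop :=
  A.Nonempty ∧ ∀ a ∈ A, ∀ t : ℝ, 0 ≤ t → t ≤ 1 → t • a ∈ A

/-- A star body: a radially closed star set. -/
def IsStarBody {d : ℕ} (A : Set (EuclideanSpace ℝ (Fin d))) : Prop :=
  IsStarSet A ∧ ∀ θ : EuclideanSpace ℝ (Fin d), ‖θ‖ = 1 → radialFn A θ ≠ ⊤ →
    (radialFn A θ).toReal • θ ∈ A

/-- The radial sum `A +̃ α B₂^d`: the star body whose radial function is `ρ_A + α`. -/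
def radialSumBall {d : ℕ} (A : Set (EuclideanSpace ℝ (Fin d))) (α : ℝ) :
    Set (EuclideanSpace ℝ (Fin d)) :=
  {x | x = 0 ∨ ENNReal.ofReal ‖x‖ ≤ radialFn A (‖x‖⁻¹ • x) + ENNReal.ofReal α}

/-- The radial distance `d_r(x,A) = inf {α > 0 : x ∈ A +̃ α B₂^d}`. -/
def radialDist {d : ℕ} (x : EuclideanSpace ℝ (Fin d))
    (A : Set (EuclideanSpace ℝ (Fin d))) : ℝ :=
  sInf {α : ℝ | 0 < α ∧ x ∈ radialSumBall A α}

lemma mem_iff_radial {d : ℕ} {A : Set (EuclideanSpace ℝ (Fin d))} (hA : IsStarBody A)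
    (x : EuclideanSpace ℝ (Fin d)) :
    x ∈ A ↔ (x = 0 ∨ ENNReal.ofReal ‖x‖ ≤ radialFn A (‖x‖⁻¹ • x)) := by
  obtain ⟨⟨⟨a, ha⟩, hstar⟩, hrc⟩ := hA
  have h0A : (0 : EuclideanSpace ℝ (Fin d)) ∈ A := by
    have := hstar a ha 0 le_rfl zero_le_one
    simpa using this
  constructor
  · intro hx
    by_cases h0 : x = 0
    · exact Or.inl h0
    · right
      apply le_sSup
      refine ⟨‖x‖, ⟨norm_nonneg x, ?_⟩, rfl⟩
      rwa [smul_smul, mul_inv_cancel₀ (norm_ne_zero_iff.mpr h0), one_smul]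
  · rintro (rfl | h)
    · exact h0A
    · by_cases h0 : x = 0
      · exact h0 ▸ h0A
      · have hn : 0 < ‖x‖ := norm_pos_iff.mpr h0
        set θ := ‖x‖⁻¹ • x with hθ
        have hθn : ‖θ‖ = 1 := by
          rw [hθ, norm_smul, norm_inv, norm_norm, inv_mul_cancel₀ hn.ne']
        have hxθ : ‖x‖ • θ = x := by
          rw [hθ, smul_smul, mul_inv_cancel₀ hn.ne', one_smul]
        by_cases htop : radialFn A θ = ⊤
        · have hlt : ENNReal.ofReal ‖x‖ < radialFn A θ := htop ▸ ENNReal.ofReal_lt_top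
          rw [radialFn, lt_sSup_iff] at hlt
          obtain ⟨b, ⟨r, ⟨hr0, hrA⟩, rfl⟩, hb⟩ := hlt
          have hr : ‖x‖ < r := by
            by_contra hc
            exact absurd (ENNReal.ofReal_le_ofReal (not_lt.mp hc)) (not_le.mpr hb)
          have := hstar _ hrA (‖x‖ / r) (by positivity)
            (by rw [div_le_one (hn.trans hr)]; exact hr.le)
          rwa [smul_smul, div_mul_cancel₀ _ (hn.trans hr).ne', hxθ] at this
        · have hmem := hrc θ hθn htop
          have hle : ‖x‖ ≤ (radialFn A θ).toReal := by
            rw [← ENNReal.ofReal_toReal htop] at h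
            exact (ENNReal.ofReal_le_ofReal_iff ENNReal.toReal_nonneg).mp h
          have hρ : 0 < (radialFn A θ).toReal := hn.trans_le hle
          have := hstar _ hmem (‖x‖ / (radialFn A θ).toReal) (by positivity)
            ((div_le_one hρ).mpr hle)
          rwa [smul_smul, div_mul_cancel₀ _ hρ.ne', hxθ] at this

lemma radialDist_eq_zero_iff {d : ℕ} (A : Set (EuclideanSpace ℝ (Fin d)))
    (x : EuclideanSpace ℝ (Fin d)) :
    radialDist x A = 0 ↔ (x = 0 ∨ ENNReal.ofReal ‖x‖ ≤ radialFn A (‖x‖⁻¹ • x)) := by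
  constructor
  · intro h
    by_contra hc
    push_neg at hc
    obtain ⟨h0, hlt⟩ := hc
    have hn : 0 < ‖x‖ := norm_pos_iff.mpr h0
    set ρ := radialFn A (‖x‖⁻¹ • x) with hρdef
    have hρtop : ρ ≠ ⊤ := (hlt.trans ENNReal.ofReal_lt_top).ne
    have hrt : ρ.toReal < ‖x‖ := by
      rw [← ENNReal.ofReal_toReal hρtop] at hlt
      exact (ENNReal.ofReal_lt_ofReal_iff hn).mp hlt
    have key : ∀ α ∈ {α : ℝ | 0 < α ∧ x ∈ radialSumBall A α}, ‖x‖ - ρ.toReal ≤ α := by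
      rintro α ⟨hα, hmem⟩
      rcases hmem with h0' | hle
      · exact absurd h0' h0
      · have : ‖x‖ ≤ ρ.toReal + α := by
          rw [← hρdef, ← ENNReal.ofReal_toReal hρtop,
            ← ENNReal.ofReal_add ENNReal.toReal_nonneg hα.le] at hle
          exact (ENNReal.ofReal_le_ofReal_iff (by positivity)).mp hle
        linarith
    have hne : (‖x‖ : ℝ) ∈ {α : ℝ | 0 < α ∧ x ∈ radialSumBall A α} := by
      exact ⟨hn, Or.inr (le_add_self)⟩
    have hinf := le_csInf ⟨_, hne⟩ key
    rw [radialDist] at h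
    rw [h] at hinf
    linarith
  · intro h
    have hset : {α : ℝ | 0 < α ∧ x ∈ radialSumBall A α} = Set.Ioi 0 := by
      ext α
      simp only [Set.mem_setOf_eq, Set.mem_Ioi, and_iff_left_iff_imp]
      intro hα
      rcases h with rfl | hle
      · exact Or.inl rfl
      · exact Or.inr (hle.trans le_self_add)
    rw [radialDist, hset, csInf_Ioi]

theorem radialDist_injective {d : ℕ} :
    (∀ A₁ A₂ : Set (EuclideanSpace ℝ (Fin d)), IsStarBody A₁ → IsStarBody A₂ →
      (A₁ = A₂ ↔ ∀ x : EuclideanSpace ℝ (Fin d), radialDist x A₁ = radialDist x A₂)) ∧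
    Function.Injective
      (fun A : {A : Set (EuclideanSpace ℝ (Fin d)) // IsStarBody A} =>
        (fun x : EuclideanSpace ℝ (Fin d) => radialDist x A.1)) := by
  have key : ∀ A : Set (EuclideanSpace ℝ (Fin d)), IsStarBody A →
      ∀ x, x ∈ A ↔ radialDist x A = 0 := fun A hA x =>
    (mem_iff_radial hA x).trans (radialDist_eq_zero_iff A x).symm
  constructor
  · intro A₁ A₂ h₁ h₂
    constructor
    · rintro rfl
      intro x; rfl
    · intro h
      ext x
      rw [key A₁ h₁, key A₂ h₂, h x]
  · intro A B h
    apply Subtype.ext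
    ext x
    have hx : radialDist x A.1 = radialDist x B.1 := congrFun h x
    rw [key A.1 A.2, key B.1 B.2, hx]
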